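/- Let V be a finite-dimensional complex vector space and g₁, g₂, g₃ pairwise commuting linear automorphisms of V of finite order with g₁g₂g₃ = id. Let F = ker(g₁ − id) ∩ ker(g₂ − id) be the common fixed subspace and c = dim_ℂ V − dim_ℂ F. Then ι(g₁) + ι(g₂) + ι(g₃) is an integer and c ≤ ι(g₁) + ι(g₂) + ι(g₃) ≤ 2c. -/

import Mathlib

/-!
Finite-order automorphisms are semisimple, and commuting ones are simultaneously diagonalizable:
`V` is the direct sum of the common eigenspaces `W (λ₁, λ₂)` of `g₁` and `g₂`, and `g₃ = (g₁ g₂)⁻¹`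
acts on `W (λ₁, λ₂)` by `(λ₁ λ₂)⁻¹`. Every eigenspace of each `gⱼ` is the sum of the pieces `W p`
it contains, so `ι(g₁) + ι(g₂) + ι(g₃)` is the sum over `p` of `dim W p` times the angle sum
`θ(λ₁) + θ(λ₂) + θ((λ₁ λ₂)⁻¹)`. The three eigenvalues multiply to `1`, so this angle sum is an
integer in `[0, 3)`; as the eigenvalues lie on the unit circle, it is `0` exactly on the common
fixed space `W (1, 1)`.
-/

/-- Degree shifting number of a linear automorphism of a complex vector space. -/
noncomputable def iota {V : Type*} [AddCommGroup V] [Module ℂ V] (g : V ≃ₗ[ℂ] V) : ℝ :=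
  ∑ᶠ μ : ℂ, Int.fract (Complex.arg μ / (2 * Real.pi)) *
    (Module.finrank ℂ (Module.End.eigenspace (g : V →ₗ[ℂ] V) μ) : ℝ)

open Module

theorem iSupIndep.eq_biSup_filter {α ι κ : Type*} [CompleteLattice α] [IsModularLattice α]
    [DecidableEq κ] {W : ι → α} {E : κ → α} (hE : iSupIndep E) {s : Finset ι}
    (hs : ⨆ i ∈ s, W i = ⊤) {π : ι → κ} (hπ : ∀ i ∈ s, W i ≤ E (π i)) :
    E = fun k => ⨆ i ∈ s.filter (π · = k), W i := by
  refine ((hE.le_iff_eq_of_iSup_eq_top ?_).mp fun k => ?_).symm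
  · refine eq_top_iff.mpr (hs ▸ iSup₂_le fun i hi => ?_)
    exact le_iSup_of_le (π i) (le_biSup W (Finset.mem_filter.mpr ⟨hi, rfl⟩))
  · refine iSup₂_le fun i hi => ?_
    obtain ⟨his, rfl⟩ := Finset.mem_filter.mp hi
    exact hπ i his

theorem Submodule.exists_finset_biSup_eq_top {R M ι : Type*} [Semiring R] [AddCommMonoid M]
    [Module R M] [IsNoetherian R M] [DecidableEq ι] {W : ι → Submodule R M} (hW : iSupIndep W)
    (htop : ⨆ i, W i = ⊤) (i₀ : ι) :
    ∃ s : Finset ι, i₀ ∈ s ∧ ⨆ i ∈ s, W i = ⊤ ∧ ∀ i ∈ s.erase i₀, W i ≠ ⊥ := by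
  set t := (finite_ne_bot_of_iSupIndep hW).toFinset
  refine ⟨insert i₀ t, Finset.mem_insert_self i₀ t, ?_, fun i hi => ?_⟩
  · refine eq_top_iff.mpr (htop ▸ iSup_le fun i => ?_)
    by_cases hi : W i = ⊥
    · exact hi ▸ bot_le
    · exact le_biSup W (Finset.mem_insert_of_mem (by simpa [t] using hi))
  · simpa [t] using Finset.mem_of_mem_insert_of_ne (Finset.mem_of_mem_erase hi)
      (Finset.ne_of_mem_erase hi)

section Dimension

variable {K V : Type*} [Field K] [AddCommGroup V] [Module K V] [FiniteDimensional K V]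

theorem Submodule.finrank_biSup_eq_sum {ι : Type*} {W : ι → Submodule K V} (hW : iSupIndep W)
    (s : Finset ι) : finrank K ↥(⨆ i ∈ s, W i) = ∑ i ∈ s, finrank K (W i) := by
  classical
  induction s using Finset.induction with
  | empty => simp
  | insert a s ha ih =>
    have hdisj : Disjoint (W a) (⨆ i ∈ s, W i) := by
      simpa using hW.disjoint_biSup (y := ↑s) ha
    rw [Finset.iSup_insert, Finset.sum_insert ha, ← ih,
      ← Submodule.finrank_sup_add_finrank_inf_eq, hdisj.eq_bot, finrank_bot, add_zero]

theorem Submodule.finsum_mul_finrank_eq_sum {ι κ R : Type*} [Semiring R]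
    {W : ι → Submodule K V} {E : κ → Submodule K V} (hW : iSupIndep W) (hE : iSupIndep E)
    {s : Finset ι} (hs : ⨆ i ∈ s, W i = ⊤) {π : ι → κ} (hπ : ∀ i ∈ s, W i ≤ E (π i))
    (θ : κ → R) :
    ∑ᶠ k, θ k * (finrank K (E k) : R) = ∑ i ∈ s, θ (π i) * (finrank K (W i) : R) := by
  classical
  have hfiber (k : κ) : finrank K (E k) = ∑ i ∈ s.filter (π · = k), finrank K (W i) := by
    rw [hE.eq_biSup_filter hs hπ, Submodule.finrank_biSup_eq_sum hW]
  rw [finsum_eq_sum_of_support_subset _ (s := s.image π)]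
  · refine Finset.sum_image' _ fun i _ => ?_
    simp only [hfiber, Nat.cast_sum, Finset.mul_sum]
    refine Finset.sum_congr rfl fun j hj => ?_
    rw [(Finset.mem_filter.mp hj).2]
  · intro k hk
    by_contra hk'
    refine hk ?_
    dsimp only
    rw [hfiber, Finset.filter_false_of_mem, Finset.sum_empty, Nat.cast_zero, mul_zero]
    exact fun i hi hik => hk' (Finset.mem_image.mpr ⟨i, hi, hik⟩)

end Dimension

namespace Module.End

variable {K V : Type*} [Field K] [AddCommGroup V] [Module K V]

def jointEigenspace (f g : End K V) (p : K × K) : Submodule K V :=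
  f.eigenspace p.1 ⊓ g.eigenspace p.2

theorem jointEigenspace_eq_iInf (f g : End K V) (p : K × K) :
    jointEigenspace f g p = ⨅ i, (![f, g] i).eigenspace ((finTwoArrowEquiv K).symm p i) :=
  le_antisymm (le_iInf_iff.mpr (Fin.forall_fin_two.mpr ⟨inf_le_left, inf_le_right⟩))
    (le_inf (iInf_le _ 0) (iInf_le _ 1))

theorem iSupIndep_jointEigenspace (f g : End K V) : iSupIndep (jointEigenspace f g) := by
  have := (iSupIndep.iInf (fun i : Fin 2 => (![f, g] i).eigenspace)
    fun i => eigenspaces_iSupIndep _).comp (finTwoArrowEquiv K).symm.injective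
  convert this using 1
  exact funext (jointEigenspace_eq_iInf f g)

theorem iSup_jointEigenspace_eq_top [IsAlgClosed K] [FiniteDimensional K V] {f g : End K V}
    (hfg : Commute f g) (hf : f.IsSemisimple) (hg : g.IsSemisimple) :
    ⨆ p, jointEigenspace f g p = ⊤ := by
  have hss : ∀ i, (![f, g] i).IsSemisimple := Fin.forall_fin_two.mpr ⟨hf, hg⟩
  have := iSup_iInf_maxGenEigenspace_eq_top_of_iSup_maxGenEigenspace_eq_top_of_commute ![f, g]
    (fun i j _ => by fin_cases i <;> fin_cases j <;> simp [hfg, hfg.symm])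
    fun i => iSup_maxGenEigenspace_eq_top _
  simp only [fun i => (hss i).isFinitelySemisimple.maxGenEigenspace_eq_eigenspace] at this
  rw [← this, ← (finTwoArrowEquiv K).symm.iSup_comp]
  exact iSup_congr (jointEigenspace_eq_iInf f g)

theorem jointEigenspace_le_eigenspace_inv_mul {f g h : End K V} (hfgh : h * (f * g) = 1)
    (p : K × K) : jointEigenspace f g p ≤ h.eigenspace (p.1 * p.2)⁻¹ := by
  intro x ⟨hx₁, hx₂⟩
  rw [SetLike.mem_coe, mem_eigenspace_iff] at hx₁ hx₂
  have hx : (p.1 * p.2) • h x = x := by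
    simpa [hx₁, hx₂, smul_smul, mul_comm] using congr($hfgh x)
  rw [mem_eigenspace_iff]
  rcases eq_or_ne (p.1 * p.2) 0 with h0 | h0
  · rw [h0, zero_smul] at hx
    rw [← hx, map_zero, smul_zero]
  · exact (eq_inv_smul_iff₀ h0).mpr hx

theorem finrank_sub_finrank_ker_inf_ker_eq_sum [FiniteDimensional K V] [DecidableEq K]
    {f g : End K V} {s : Finset (K × K)} (hs₁ : (1, 1) ∈ s)
    (hs : ⨆ p ∈ s, jointEigenspace f g p = ⊤) :
    finrank K V -
        finrank K ↥(LinearMap.ker (f - LinearMap.id) ⊓ LinearMap.ker (g - LinearMap.id)) =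
      ∑ p ∈ s.erase (1, 1), finrank K (jointEigenspace f g p) := by
  have hfixed : LinearMap.ker (f - LinearMap.id) ⊓ LinearMap.ker (g - LinearMap.id) =
      jointEigenspace f g (1, 1) := by
    ext x
    simp [jointEigenspace, sub_eq_zero]
  rw [hfixed, ← finrank_top K V, ← hs,
    Submodule.finrank_biSup_eq_sum (iSupIndep_jointEigenspace f g),
    ← Finset.sum_erase_add _ _ hs₁, Nat.add_sub_cancel]

theorem isSemisimple_of_isOfFinOrder [CharZero K] {f : End K V} (hf : IsOfFinOrder f) :
    f.IsSemisimple := by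
  obtain ⟨n, hn, hfn⟩ := hf.exists_pow_eq_one
  refine isSemisimple_of_squarefree_aeval_eq_zero
    (Polynomial.X_pow_sub_one_separable_iff.mpr (Nat.cast_ne_zero.mpr hn.ne')).squarefree ?_
  simp [hfn]

theorem HasEigenvalue.isOfFinOrder {f : End K V} {μ : K} (hμ : f.HasEigenvalue μ)
    (hf : IsOfFinOrder f) : IsOfFinOrder μ := by
  obtain ⟨n, hn, hfn⟩ := hf.exists_pow_eq_one
  obtain ⟨x, hx⟩ := hμ.exists_hasEigenvector
  refine isOfFinOrder_iff_pow_eq_one.mpr ⟨n, hn, smul_left_injective K hx.2 ?_⟩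
  simpa [hfn] using (hx.pow_apply n).symm

theorem norm_eq_one_of_jointEigenspace_ne_bot {V : Type*} [AddCommGroup V] [Module ℂ V]
    {f g : End ℂ V} (hf : IsOfFinOrder f) (hg : IsOfFinOrder g) {p : ℂ × ℂ}
    (hp : jointEigenspace f g p ≠ ⊥) :
    ‖p.1‖ = 1 ∧ ‖p.2‖ = 1 :=
  ⟨(HasEigenvalue.isOfFinOrder (hasEigenvalue_iff.mpr (ne_bot_of_le_ne_bot hp inf_le_left))
      hf).norm_eq_one,
    (HasEigenvalue.isOfFinOrder (hasEigenvalue_iff.mpr (ne_bot_of_le_ne_bot hp inf_le_right))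
      hg).norm_eq_one⟩

end Module.End

namespace Complex

open Real

/-- The angle `θ(z) ∈ [0, 1)` of the paper, so that `z = ‖z‖ e^{2πiθ(z)}`. -/
noncomputable def fractArg (z : ℂ) : ℝ := Int.fract (arg z / (2 * π))

@[simp]
theorem fractArg_one : fractArg 1 = 0 := by simp [fractArg]

theorem eq_one_of_fractArg_eq_zero {z : ℂ} (hz : ‖z‖ = 1) (h : fractArg z = 0) : z = 1 := by
  obtain ⟨n, hn⟩ := Int.fract_eq_zero_iff.mp h
  have harg : arg z = n * (2 * π) := (div_eq_iff (by positivity)).mp hn.symm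
  have hn0 : n = 0 := by
    have h₁ : (n : ℝ) * (2 * π) ≤ π := harg ▸ arg_le_pi z
    have h₂ : -π < n * (2 * π) := harg ▸ neg_pi_lt_arg z
    have : (n : ℝ) < 1 ∧ -1 < (n : ℝ) := ⟨by nlinarith [pi_pos], by nlinarith [pi_pos]⟩
    have : n < 1 ∧ -1 < n := by exact_mod_cast this
    omega
  rw [hn0, Int.cast_zero, zero_mul] at harg
  simpa [hz, harg] using (norm_mul_exp_arg_mul_I z).symm

theorem exists_fractArg_add_fractArg_add_fractArg_eq_int {z₁ z₂ z₃ : ℂ}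
    (h : z₁ * z₂ * z₃ = 1) : ∃ n : ℤ, fractArg z₁ + fractArg z₂ + fractArg z₃ = n := by
  have h₁₂ : z₁ * z₂ ≠ 0 := left_ne_zero_of_mul_eq_one h
  have h₃ : z₃ ≠ 0 := right_ne_zero_of_mul_eq_one h
  have hangle : ((arg z₁ + arg z₂ + arg z₃ : ℝ) : Real.Angle) = 0 := by
    rw [Real.Angle.coe_add, Real.Angle.coe_add, ← arg_mul_coe_angle (left_ne_zero_of_mul h₁₂)
      (right_ne_zero_of_mul h₁₂), ← arg_mul_coe_angle h₁₂ h₃, h, arg_one, Real.Angle.coe_zero]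
  obtain ⟨m, hm⟩ := Real.Angle.coe_eq_zero_iff.mp hangle
  refine ⟨m - ⌊arg z₁ / (2 * π)⌋ - ⌊arg z₂ / (2 * π)⌋ - ⌊arg z₃ / (2 * π)⌋, ?_⟩
  rw [zsmul_eq_mul] at hm
  simp only [fractArg, Int.fract, Int.cast_sub]
  field_simp
  linarith

theorem exists_mem_Icc_fractArg_add_fractArg_add_fractArg_inv_mul_eq {z₁ z₂ : ℂ}
    (h₁ : ‖z₁‖ = 1) (h₂ : ‖z₂‖ = 1) (hne : (z₁, z₂) ≠ (1, 1)) :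
    ∃ n ∈ Set.Icc 1 2, fractArg z₁ + fractArg z₂ + fractArg (z₁ * z₂)⁻¹ = (n : ℕ) := by
  have hz : z₁ * z₂ ≠ 0 := by simp [← norm_ne_zero_iff, h₁, h₂]
  obtain ⟨n, hn⟩ := exists_fractArg_add_fractArg_add_fractArg_eq_int (mul_inv_cancel₀ hz)
  have hθ (z : ℂ) : 0 ≤ fractArg z ∧ fractArg z < 1 := ⟨Int.fract_nonneg _, Int.fract_lt_one _⟩
  have hlt : n < 3 := by
    have : (n : ℝ) < 3 := by linarith [hθ z₁, hθ z₂, hθ (z₁ * z₂)⁻¹]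
    exact_mod_cast this
  have hpos : 0 < n := by
    by_contra! hn0
    have : (n : ℝ) ≤ 0 := by exact_mod_cast hn0
    refine hne (Prod.ext (eq_one_of_fractArg_eq_zero h₁ ?_) (eq_one_of_fractArg_eq_zero h₂ ?_)) <;>
      linarith [hθ z₁, hθ z₂, hθ (z₁ * z₂)⁻¹]
  exact ⟨n.toNat, ⟨by omega, by omega⟩,
    by rw [hn]; exact_mod_cast (Int.toNat_of_nonneg hpos.le).symm⟩

end Complex

open Module.End Complex

section Iota

variable {V : Type*} [AddCommGroup V] [Module ℂ V] [FiniteDimensional ℂ V]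

theorem iota_eq_sum_of_le_eigenspace {ι : Type*} {W : ι → Submodule ℂ V} (hW : iSupIndep W)
    {s : Finset ι} (hs : ⨆ i ∈ s, W i = ⊤) (g : V ≃ₗ[ℂ] V) {π : ι → ℂ}
    (hπ : ∀ i ∈ s, W i ≤ eigenspace (g : V →ₗ[ℂ] V) (π i)) :
    iota g = ∑ i ∈ s, fractArg (π i) * (finrank ℂ (W i) : ℝ) :=
  Submodule.finsum_mul_finrank_eq_sum hW (eigenspaces_iSupIndep _) hs hπ fractArg

theorem iota_add_iota_add_iota_eq_sum {g₁ g₂ g₃ : V ≃ₗ[ℂ] V} (hprod : g₁ * g₂ * g₃ = 1)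
    {s : Finset (ℂ × ℂ)} (hs : ⨆ p ∈ s, jointEigenspace (g₁ : End ℂ V) g₂ p = ⊤) :
    iota g₁ + iota g₂ + iota g₃ =
      ∑ p ∈ s, (fractArg p.1 + fractArg p.2 + fractArg (p.1 * p.2)⁻¹) *
        (finrank ℂ (jointEigenspace (g₁ : End ℂ V) g₂ p) : ℝ) := by
  have hW := iSupIndep_jointEigenspace (g₁ : End ℂ V) g₂
  have h₃ := jointEigenspace_le_eigenspace_inv_mul
    congr(LinearEquiv.automorphismGroup.toLinearMapMonoidHom $(mul_eq_one_comm.mp hprod))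
  rw [iota_eq_sum_of_le_eigenspace hW hs g₁ fun p _ => inf_le_left,
    iota_eq_sum_of_le_eigenspace hW hs g₂ fun p _ => inf_le_right,
    iota_eq_sum_of_le_eigenspace hW hs g₃ fun p _ => h₃ p,
    ← Finset.sum_add_distrib, ← Finset.sum_add_distrib]
  simp only [add_mul]

end Iota

theorem iota_triple_bounds_general {V : Type*} [AddCommGroup V] [Module ℂ V]
    [FiniteDimensional ℂ V] (g₁ g₂ g₃ : V ≃ₗ[ℂ] V)
    (h₁ : IsOfFinOrder g₁) (h₂ : IsOfFinOrder g₂)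
    (hc₁₂ : Commute g₁ g₂)
    (hprod : g₁ * g₂ * g₃ = 1)
    (c : ℕ)
    (hc : c = Module.finrank ℂ V -
        Module.finrank ℂ
          ↥(LinearMap.ker ((g₁ : V →ₗ[ℂ] V) - LinearMap.id) ⊓
            LinearMap.ker ((g₂ : V →ₗ[ℂ] V) - LinearMap.id))) :
    (∃ k : ℤ, iota g₁ + iota g₂ + iota g₃ = k) ∧
      (c : ℝ) ≤ iota g₁ + iota g₂ + iota g₃ ∧
      iota g₁ + iota g₂ + iota g₃ ≤ 2 * c := by
  classical
  let φ := LinearEquiv.automorphismGroup.toLinearMapMonoidHom (R := ℂ) (M := V)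
  have hf₁ := φ.isOfFinOrder h₁
  have hf₂ := φ.isOfFinOrder h₂
  set W := jointEigenspace (g₁ : End ℂ V) g₂
  obtain ⟨s, hs₁, hs, hsupp⟩ := Submodule.exists_finset_biSup_eq_top
    (iSupIndep_jointEigenspace _ _) (iSup_jointEigenspace_eq_top (hc₁₂.map φ)
      (isSemisimple_of_isOfFinOrder hf₁) (isSemisimple_of_isOfFinOrder hf₂)) (1, 1)
  have hangles (p) (hp : p ∈ s.erase (1, 1)) :=
    have hnorm := norm_eq_one_of_jointEigenspace_ne_bot hf₁ hf₂ (hsupp p hp)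
    exists_mem_Icc_fractArg_add_fractArg_add_fractArg_inv_mul_eq hnorm.1 hnorm.2
      (Finset.ne_of_mem_erase hp)
  choose! n hn using hangles
  set N := ∑ p ∈ s.erase (1, 1), n p * finrank ℂ (W p)
  have hcN : c = ∑ p ∈ s.erase (1, 1), finrank ℂ (W p) :=
    hc.trans (finrank_sub_finrank_ker_inf_ker_eq_sum hs₁ hs)
  have htotal : iota g₁ + iota g₂ + iota g₃ = N := by
    rw [iota_add_iota_add_iota_eq_sum hprod hs, ← Finset.sum_erase (a := (1, 1)) _ (by simp),
      Nat.cast_sum]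
    exact Finset.sum_congr rfl fun p hp => by rw [(hn p hp).2, Nat.cast_mul]
  have hlow : c ≤ N := hcN ▸ Finset.sum_le_sum fun p hp => Nat.le_mul_of_pos_left _ (hn p hp).1.1
  have hhigh : N ≤ 2 * c := hcN ▸ (Finset.mul_sum _ _ 2).symm ▸
    Finset.sum_le_sum fun p hp => Nat.mul_le_mul_right _ (hn p hp).1.2
  rw [htotal]
  exact ⟨⟨N, rfl⟩, by exact_mod_cast hlow, by exact_mod_cast hhigh⟩

theorem iota_triple_bounds {V : Type*} [AddCommGroup V] [Module ℂ V]
    [FiniteDimensional ℂ V] (g₁ g₂ g₃ : V ≃ₗ[ℂ] V)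
    (h₁ : IsOfFinOrder g₁) (h₂ : IsOfFinOrder g₂) (h₃ : IsOfFinOrder g₃)
    (hc₁₂ : Commute g₁ g₂) (hc₁₃ : Commute g₁ g₃) (hc₂₃ : Commute g₂ g₃)
    (hprod : g₁ * g₂ * g₃ = 1)
    (c : ℕ)
    (hc : c = Module.finrank ℂ V -
        Module.finrank ℂ
          ↥(LinearMap.ker ((g₁ : V →ₗ[ℂ] V) - LinearMap.id) ⊓
            LinearMap.ker ((g₂ : V →ₗ[ℂ] V) - LinearMap.id))) :
    (∃ k : ℤ, iota g₁ + iota g₂ + iota g₃ = k) ∧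
      (c : ℝ) ≤ iota g₁ + iota g₂ + iota g₃ ∧
      iota g₁ + iota g₂ + iota g₃ ≤ 2 * c :=
  iota_triple_bounds_general g₁ g₂ g₃ h₁ h₂ hc₁₂ hprod c hc
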